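/- arXiv:1312.3059 — 7 statements merged into one kernel-verified Lean document; each statement's English description precedes it below -/
import Mathlib

section
/- If a disjunction α₀ ∨ α₁ is derivable in intuitionistic propositional logic (with empty antecedent), then α₀ is derivable or α₁ is derivable. -/
/-- Propositional formulas over `⊥, ∨, ∧, ⊃` with variables. -/
inductive Fml : Type
  | var : ℕ → Fml
  | bot : Fml
  | and : Fml → Fml → Fml
  | or : Fml → Fml → Fml
  | imp : Fml → Fml → Fml
  deriving DecidableEq

abbrev Cedent := Finset Fml
abbrev Sequent := Cedent × Fml

/-- Natural deduction derivations for intuitionistic propositional logic (NJp),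
with sequents `Γ ⇒ α`, axioms `α, Γ ⇒ α` and `⊥, Γ ⇒ p` for atoms `p`. -/
inductive NJ : Cedent → Fml → Type
  | ax {Γ α} : α ∈ Γ → NJ Γ α
  | botE {Γ p} : Fml.bot ∈ Γ → NJ Γ (Fml.var p)
  | andI {Γ α β} : NJ Γ α → NJ Γ β → NJ Γ (Fml.and α β)
  | andE₀ {Γ α β} : NJ Γ (Fml.and α β) → NJ Γ α
  | andE₁ {Γ α β} : NJ Γ (Fml.and α β) → NJ Γ β
  | orI₀ {Γ α β} : NJ Γ α → NJ Γ (Fml.or α β)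
  | orI₁ {Γ α β} : NJ Γ β → NJ Γ (Fml.or α β)
  | orE {Γ α β γ} : NJ Γ (Fml.or α β) → NJ (insert α Γ) γ → NJ (insert β Γ) γ → NJ Γ γ
  | impI {Γ α β} : NJ (insert α Γ) β → NJ Γ (Fml.imp α β)
  | impE {Γ α β} : NJ Γ (Fml.imp α β) → NJ Γ α → NJ Γ β

/-- Intuitionistic derivability of a sequent. -/
def Derivable (Γ : Cedent) (α : Fml) : Prop := Nonempty (NJ Γ α)

/-- Harrop formulas: no strictly positive occurrence of `∨`. -/
def Harrop : Fml → Prop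
  | .var _ => True
  | .bot => True
  | .and α β => Harrop α ∧ Harrop β
  | .or _ _ => False
  | .imp _ β => Harrop β

/-- A Harrop cedent: all of its formulas are Harrop. -/
def HarropCed (Γ : Cedent) : Prop := ∀ γ ∈ Γ, Harrop γ


theorem NJ.weak {Γ α} (d : NJ Γ α) : ∀ {Δ : Cedent}, Γ ⊆ Δ → Derivable Δ α := by
  induction d with
  | ax h => exact fun s => ⟨.ax (s h)⟩
  | botE h => exact fun s => ⟨.botE (s h)⟩
  | andI _ _ ih1 ih2 =>
      intro Δ s
      obtain ⟨d1⟩ := ih1 s; obtain ⟨d2⟩ := ih2 s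
      exact ⟨.andI d1 d2⟩
  | andE₀ _ ih => intro Δ s; obtain ⟨d⟩ := ih s; exact ⟨.andE₀ d⟩
  | andE₁ _ ih => intro Δ s; obtain ⟨d⟩ := ih s; exact ⟨.andE₁ d⟩
  | orI₀ _ ih => intro Δ s; obtain ⟨d⟩ := ih s; exact ⟨.orI₀ d⟩
  | orI₁ _ ih => intro Δ s; obtain ⟨d⟩ := ih s; exact ⟨.orI₁ d⟩
  | orE _ _ _ ih ih0 ih1 =>
      intro Δ s
      obtain ⟨d⟩ := ih s
      obtain ⟨d0⟩ := ih0 (Finset.insert_subset_insert _ s)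
      obtain ⟨d1⟩ := ih1 (Finset.insert_subset_insert _ s)
      exact ⟨.orE d d0 d1⟩
  | impI _ ih =>
      intro Δ s
      obtain ⟨d⟩ := ih (Finset.insert_subset_insert _ s)
      exact ⟨.impI d⟩
  | impE _ _ ih1 ih2 =>
      intro Δ s
      obtain ⟨d1⟩ := ih1 s; obtain ⟨d2⟩ := ih2 s
      exact ⟨.impE d1 d2⟩

/-- If every formula of `Γ` is derivable from the empty cedent, then anything
derivable from `Γ` is derivable from the empty cedent. -/
theorem close (Γ : Cedent) (h : ∀ γ ∈ Γ, Derivable ∅ γ) {β : Fml}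
    (d : Derivable Γ β) : Derivable ∅ β := by
  induction Γ using Finset.induction_on with
  | empty => exact d
  | @insert a s hnot ih =>
      obtain ⟨d⟩ := d
      obtain ⟨da⟩ := (h a (Finset.mem_insert_self a s)).elim fun x => x.weak (Finset.empty_subset s)
      apply ih (fun γ hγ => h γ (Finset.mem_insert_of_mem hγ))
      exact ⟨.impE (.impI d) da⟩

/-- The Kleene slash. -/
def Slash : Fml → Prop
  | .var _ => True
  | .bot => False
  | .and α β => Slash α ∧ Slash β
  | .or α β => (Derivable ∅ α ∧ Slash α) ∨ (Derivable ∅ β ∧ Slash β)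
  | .imp α β => (Derivable ∅ α ∧ Slash α) → (Derivable ∅ β ∧ Slash β)

theorem slash_sound {Γ α} (d : NJ Γ α) :
    (∀ γ ∈ Γ, Derivable ∅ γ ∧ Slash γ) → Derivable ∅ α ∧ Slash α := by
  induction d with
  | ax hm => exact fun h => h _ hm
  | botE hm => exact fun h => absurd (h _ hm).2 (by simp [Slash])
  | andI _ _ ih1 ih2 =>
      intro h
      obtain ⟨⟨d1⟩, s1⟩ := ih1 h
      obtain ⟨⟨d2⟩, s2⟩ := ih2 h
      exact ⟨⟨.andI d1 d2⟩, s1, s2⟩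
  | andE₀ _ ih =>
      intro h
      obtain ⟨⟨d⟩, s1, s2⟩ := ih h
      exact ⟨⟨.andE₀ d⟩, s1⟩
  | andE₁ _ ih =>
      intro h
      obtain ⟨⟨d⟩, s1, s2⟩ := ih h
      exact ⟨⟨.andE₁ d⟩, s2⟩
  | orI₀ _ ih =>
      intro h
      obtain ⟨⟨d⟩, s⟩ := ih h
      exact ⟨⟨.orI₀ d⟩, Or.inl ⟨⟨d⟩, s⟩⟩
  | orI₁ _ ih =>
      intro h
      obtain ⟨⟨d⟩, s⟩ := ih h
      exact ⟨⟨.orI₁ d⟩, Or.inr ⟨⟨d⟩, s⟩⟩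
  | orE _ _ _ ih ih0 ih1 =>
      intro h
      obtain ⟨dor, s⟩ := ih h
      rcases s with hs | hs
      · refine ih0 fun γ hγ => ?_
        rcases Finset.mem_insert.mp hγ with rfl | hγ
        · exact hs
        · exact h _ hγ
      · refine ih1 fun γ hγ => ?_
        rcases Finset.mem_insert.mp hγ with rfl | hγ
        · exact hs
        · exact h _ hγ
  | @impI Γ a b d ih =>
      intro h
      constructor
      · exact close Γ (fun γ hγ => (h γ hγ).1) ⟨.impI d⟩
      · intro ha
        refine ih fun γ hγ => ?_
        rcases Finset.mem_insert.mp hγ with rfl | hγ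
        · exact ha
        · exact h _ hγ
  | impE _ _ ih1 ih2 =>
      intro h
      obtain ⟨dimp, simp⟩ := ih1 h
      exact simp (ih2 h)

/-- Disjunction property of intuitionistic propositional logic. -/
theorem dp_empty (α₀ α₁ : Fml) (h : Derivable ∅ (Fml.or α₀ α₁)) :
    Derivable ∅ α₀ ∨ Derivable ∅ α₁ := by
  obtain ⟨d⟩ := h
  have hs := (slash_sound d (by simp)).2
  rcases hs with ⟨d0, _⟩ | ⟨d1, _⟩
  · exact Or.inl d0
  · exact Or.inr d1
end

section
/- Let Γ be a Harrop cedent with ⊥ ∉ Γ and let α be a non-Harrop formula (containing a strictly positive occurrence of ∨). Then any Harrop normal NJp-derivation of Γ ⇒ α ends with an introduction rule. -/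
/-- The set of sequents occurring in a derivation. -/
def NJ.seqs : ∀ {Γ α}, NJ Γ α → Set Sequent
  | Γ, α, .ax _ => {(Γ, α)}
  | Γ, _, .botE (p := p) _ => {(Γ, Fml.var p)}
  | Γ, _, .andI (α := α) (β := β) d₀ d₁ => insert (Γ, Fml.and α β) (d₀.seqs ∪ d₁.seqs)
  | Γ, α, .andE₀ d => insert (Γ, α) d.seqs
  | Γ, α, .andE₁ d => insert (Γ, α) d.seqs
  | Γ, _, .orI₀ (α := α) (β := β) d => insert (Γ, Fml.or α β) d.seqs
  | Γ, _, .orI₁ (α := α) (β := β) d => insert (Γ, Fml.or α β) d.seqs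
  | Γ, α, .orE d d₀ d₁ => insert (Γ, α) (d.seqs ∪ d₀.seqs ∪ d₁.seqs)
  | Γ, _, .impI (α := α) (β := β) d => insert (Γ, Fml.imp α β) d.seqs
  | Γ, α, .impE d₀ d₁ => insert (Γ, α) (d₀.seqs ∪ d₁.seqs)

/-- A derivation ends with an introduction rule. -/
def NJ.EndsWithIntro : ∀ {Γ α}, NJ Γ α → Prop
  | _, _, .andI _ _ => True
  | _, _, .orI₀ _ => True
  | _, _, .orI₁ _ => True
  | _, _, .impI _ => True
  | _, _, _ => False

/-- A derivation is Harrop normal: no conclusion of an introduction rule is the major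
premiss of an elimination rule whose lower sequent has a Harrop antecedent. -/
def NJ.HarropNormal : ∀ {Γ α}, NJ Γ α → Prop
  | _, _, .ax _ => True
  | _, _, .botE _ => True
  | _, _, .andI d₀ d₁ => d₀.HarropNormal ∧ d₁.HarropNormal
  | _, _, .orI₀ d => d.HarropNormal
  | _, _, .orI₁ d => d.HarropNormal
  | _, _, .impI d => d.HarropNormal
  | Γ, _, .andE₀ d => d.HarropNormal ∧ (HarropCed Γ → ¬ d.EndsWithIntro)
  | Γ, _, .andE₁ d => d.HarropNormal ∧ (HarropCed Γ → ¬ d.EndsWithIntro)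
  | Γ, _, .orE d d₀ d₁ =>
      d.HarropNormal ∧ d₀.HarropNormal ∧ d₁.HarropNormal ∧ (HarropCed Γ → ¬ d.EndsWithIntro)
  | Γ, _, .impE d₀ d₁ => d₀.HarropNormal ∧ d₁.HarropNormal ∧ (HarropCed Γ → ¬ d₀.EndsWithIntro)

/-- A Harrop normal derivation of a non-Harrop formula from a Harrop cedent without `⊥`
ends with an introduction rule. -/
theorem harropNormal_endsWithIntro (Γ : Cedent) (α : Fml)
    (hΓ : HarropCed Γ) (hbot : Fml.bot ∉ Γ) (hα : ¬ Harrop α)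
    (d : NJ Γ α) (hd : d.HarropNormal) : d.EndsWithIntro := by
  revert hΓ hbot hα hd
  induction d with
  | ax h => intro hΓ _ hα _; exact absurd (hΓ _ h) hα
  | botE h => intro _ hbot _ _; exact absurd h hbot
  | andI _ _ _ _ => intro _ _ _ _; trivial
  | orI₀ _ _ => intro _ _ _ _; trivial
  | orI₁ _ _ => intro _ _ _ _; trivial
  | impI _ _ => intro _ _ _ _; trivial
  | andE₀ d ih =>
      intro hΓ hbot hα hd
      exact absurd (ih hΓ hbot (fun h => hα h.1) hd.1) (hd.2 hΓ)
  | andE₁ d ih =>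
      intro hΓ hbot hα hd
      exact absurd (ih hΓ hbot (fun h => hα h.2) hd.1) (hd.2 hΓ)
  | orE d d₀ d₁ ih _ _ =>
      intro hΓ hbot hα hd
      exact absurd (ih hΓ hbot (fun h => h) hd.1) (hd.2.2.2 hΓ)
  | impE d₀ d₁ ih₀ _ =>
      intro hΓ hbot hα hd
      exact absurd (ih₀ hΓ hbot (fun h => hα h) hd.1) (hd.2.2 hΓ)
end

section
/- If a derivation d is contracted at a Harrop maximal formula occurrence (performing the standard reduction for ∨, ∧, or ⊃ redexes), then every sequent occurring in the resulting derivation d′ is immediately derivable from the set of sequents occurring in d. -/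
/-- Sequents immediately derivable (by cuts only) from a set of sequents `S`. -/
inductive ID (S : Set Sequent) : Sequent → Prop
  | mem {s} : s ∈ S → ID S s
  | cut {Γ Δ : Cedent} {α β : Fml} :
      ID S (Γ, β) → ID S (insert β Δ, α) → ID S (Γ ∪ Δ, α)

/-- The sequents of the derivation figure obtained by grafting `d0 : Γ ⇒ α` on the
`α`-axioms of `d1`, deleting `α` from antecedents and adding `Γ`. -/
def graftSeqs {Γ : Cedent} {α : Fml} {Δ : Cedent} {β : Fml}
    (d0 : NJ Γ α) (d1 : NJ Δ β) : Set Sequent :=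
  d0.seqs ∪ (fun s : Sequent => ((Γ ∪ s.1.erase α : Cedent), s.2)) '' d1.seqs

/-- One-step contraction of a Harrop maximal formula occurrence (standard reduction of an
`∨`, `∧` or `⊃` redex whose elimination has a Harrop antecedent, anywhere in the
derivation); the resulting derivation is represented by its set of sequents. -/
inductive Red : ∀ {Γ : Cedent} {α : Fml}, NJ Γ α → Set Sequent → Prop
  | andRed₀ {Γ α β} (h : HarropCed Γ) (d₀ : NJ Γ α) (d₁ : NJ Γ β) :
      Red (NJ.andE₀ (NJ.andI d₀ d₁)) d₀.seqs
  | andRed₁ {Γ α β} (h : HarropCed Γ) (d₀ : NJ Γ α) (d₁ : NJ Γ β) :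
      Red (NJ.andE₁ (NJ.andI d₀ d₁)) d₁.seqs
  | orRed₀ {Γ α β γ} (h : HarropCed Γ) (d : NJ Γ α)
      (d₀ : NJ (insert α Γ) γ) (d₁ : NJ (insert β Γ) γ) :
      Red (NJ.orE (NJ.orI₀ d) d₀ d₁) (graftSeqs d d₀)
  | orRed₁ {Γ α β γ} (h : HarropCed Γ) (d : NJ Γ β)
      (d₀ : NJ (insert α Γ) γ) (d₁ : NJ (insert β Γ) γ) :
      Red (NJ.orE (NJ.orI₁ d) d₀ d₁) (graftSeqs d d₁)
  | impRed {Γ α β} (h : HarropCed Γ) (d₁ : NJ (insert α Γ) β) (d₀ : NJ Γ α) :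
      Red (NJ.impE (NJ.impI d₁) d₀) (graftSeqs d₀ d₁)
  | andIc₀ {Γ α β T} {d₀ : NJ Γ α} (d₁ : NJ Γ β) : Red d₀ T →
      Red (NJ.andI d₀ d₁) (insert (Γ, Fml.and α β) (T ∪ d₁.seqs))
  | andIc₁ {Γ α β T} (d₀ : NJ Γ α) {d₁ : NJ Γ β} : Red d₁ T →
      Red (NJ.andI d₀ d₁) (insert (Γ, Fml.and α β) (d₀.seqs ∪ T))
  | andEc₀ {Γ α β T} {d : NJ Γ (Fml.and α β)} : Red d T →
      Red (NJ.andE₀ d) (insert (Γ, α) T)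
  | andEc₁ {Γ α β T} {d : NJ Γ (Fml.and α β)} : Red d T →
      Red (NJ.andE₁ d) (insert (Γ, β) T)
  | orIc₀ {Γ α β T} {d : NJ Γ α} : Red d T →
      Red (NJ.orI₀ (β := β) d) (insert (Γ, Fml.or α β) T)
  | orIc₁ {Γ α β T} {d : NJ Γ β} : Red d T →
      Red (NJ.orI₁ (α := α) d) (insert (Γ, Fml.or α β) T)
  | orEc₀ {Γ α β γ T} {d : NJ Γ (Fml.or α β)}
      (d₀ : NJ (insert α Γ) γ) (d₁ : NJ (insert β Γ) γ) : Red d T →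
      Red (NJ.orE d d₀ d₁) (insert (Γ, γ) (T ∪ d₀.seqs ∪ d₁.seqs))
  | orEc₁ {Γ α β γ T} (d : NJ Γ (Fml.or α β))
      {d₀ : NJ (insert α Γ) γ} (d₁ : NJ (insert β Γ) γ) : Red d₀ T →
      Red (NJ.orE d d₀ d₁) (insert (Γ, γ) (d.seqs ∪ T ∪ d₁.seqs))
  | orEc₂ {Γ α β γ T} (d : NJ Γ (Fml.or α β))
      (d₀ : NJ (insert α Γ) γ) {d₁ : NJ (insert β Γ) γ} : Red d₁ T →
      Red (NJ.orE d d₀ d₁) (insert (Γ, γ) (d.seqs ∪ d₀.seqs ∪ T))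
  | impIc {Γ α β T} {d : NJ (insert α Γ) β} : Red d T →
      Red (NJ.impI d) (insert (Γ, Fml.imp α β) T)
  | impEc₀ {Γ α β T} {d₀ : NJ Γ (Fml.imp α β)} (d₁ : NJ Γ α) : Red d₀ T →
      Red (NJ.impE d₀ d₁) (insert (Γ, β) (T ∪ d₁.seqs))
  | impEc₁ {Γ α β T} (d₀ : NJ Γ (Fml.imp α β)) {d₁ : NJ Γ α} : Red d₁ T →
      Red (NJ.impE d₀ d₁) (insert (Γ, β) (d₀.seqs ∪ T))

theorem ID.mono {S S' : Set Sequent} (h : S ⊆ S') : ∀ {s}, ID S s → ID S' s := by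
  intro s hs
  induction hs with
  | mem hm => exact ID.mem (h hm)
  | cut _ _ ih0 ih1 => exact ID.cut ih0 ih1

theorem NJ.self_mem_seqs : ∀ {Γ α} (d : NJ Γ α), (Γ, α) ∈ d.seqs := by
  intro Γ α d
  cases d <;> simp [NJ.seqs]

theorem NJ.seqs_subset : ∀ {Γ α} (d : NJ Γ α), ∀ s ∈ d.seqs, Γ ⊆ s.1 := by
  intro Γ α d
  induction d with
  | ax h =>
      intro s hs; simp only [NJ.seqs, Set.mem_singleton_iff] at hs; subst hs
      exact Finset.Subset.refl _
  | botE h =>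
      intro s hs; simp only [NJ.seqs, Set.mem_singleton_iff] at hs; subst hs
      exact Finset.Subset.refl _
  | andI d₀ d₁ ih₀ ih₁ =>
      intro s hs
      rcases hs with rfl | hs | hs
      · exact Finset.Subset.refl _
      · exact ih₀ s hs
      · exact ih₁ s hs
  | andE₀ d ih =>
      intro s hs
      rcases hs with rfl | hs
      · exact Finset.Subset.refl _
      · exact ih s hs
  | andE₁ d ih =>
      intro s hs
      rcases hs with rfl | hs
      · exact Finset.Subset.refl _
      · exact ih s hs
  | orI₀ d ih =>
      intro s hs
      rcases hs with rfl | hs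
      · exact Finset.Subset.refl _
      · exact ih s hs
  | orI₁ d ih =>
      intro s hs
      rcases hs with rfl | hs
      · exact Finset.Subset.refl _
      · exact ih s hs
  | orE d d₀ d₁ ih ih₀ ih₁ =>
      intro s hs
      rcases hs with rfl | (hs | hs) | hs
      · exact Finset.Subset.refl _
      · exact ih s hs
      · exact (Finset.subset_insert _ _).trans (ih₀ s hs)
      · exact (Finset.subset_insert _ _).trans (ih₁ s hs)
  | impI d ih =>
      intro s hs
      rcases hs with rfl | hs
      · exact Finset.Subset.refl _
      · exact (Finset.subset_insert _ _).trans (ih s hs)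
  | impE d₀ d₁ ih₀ ih₁ =>
      intro s hs
      rcases hs with rfl | hs | hs
      · exact Finset.Subset.refl _
      · exact ih₀ s hs
      · exact ih₁ s hs

theorem graft_id {Γ : Cedent} {α : Fml} {Δ : Cedent} {β : Fml}
    (d0 : NJ Γ α) (d1 : NJ Δ β) (hα : α ∈ Δ) (S : Set Sequent)
    (h0 : d0.seqs ⊆ S) (h1 : d1.seqs ⊆ S) :
    ∀ s ∈ graftSeqs d0 d1, ID S s := by
  intro s hs
  rcases hs with hs | ⟨t, ht, rfl⟩
  · exact ID.mem (h0 hs)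
  · have hαt : α ∈ t.1 := d1.seqs_subset t ht hα
    have h2 : ID S (insert α (t.1.erase α), t.2) := by
      rw [Finset.insert_erase hαt]
      exact ID.mem (h1 ht)
    exact ID.cut (ID.mem (h0 d0.self_mem_seqs)) h2

/-- Contracting a Harrop maximal formula occurrence yields a derivation every sequent of
which is immediately derivable from the sequents of the original derivation. -/
theorem red_id (Γ : Cedent) (α : Fml) (d : NJ Γ α) (T : Set Sequent)
    (h : Red d T) : ∀ s ∈ T, ID d.seqs s := by
  induction h with
  | andRed₀ h d₀ d₁ =>
      intro s hs
      exact ID.mem (by simp only [NJ.seqs]; right; right; left; exact hs)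
  | andRed₁ h d₀ d₁ =>
      intro s hs
      exact ID.mem (by simp only [NJ.seqs]; right; right; right; exact hs)
  | orRed₀ h d d₀ d₁ =>
      refine graft_id d d₀ (Finset.mem_insert_self _ _) _ ?_ ?_
      · intro s hs; simp only [NJ.seqs]; right; left; left; right; exact hs
      · intro s hs; simp only [NJ.seqs]; right; left; right; exact hs
  | orRed₁ h d d₀ d₁ =>
      refine graft_id d d₁ (Finset.mem_insert_self _ _) _ ?_ ?_
      · intro s hs; simp only [NJ.seqs]; right; left; left; right; exact hs
      · intro s hs; simp only [NJ.seqs]; right; right; exact hs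
  | impRed h d₁ d₀ =>
      refine graft_id d₀ d₁ (Finset.mem_insert_self _ _) _ ?_ ?_
      · intro s hs; simp only [NJ.seqs]; right; right; exact hs
      · intro s hs; simp only [NJ.seqs]; right; left; right; exact hs
  | andIc₀ d₁ hr ih =>
      intro s hs
      rcases hs with rfl | hs | hs
      · exact ID.mem (Set.mem_insert _ _)
      · exact (ih s hs).mono (fun t ht => by right; left; exact ht)
      · exact ID.mem (by right; right; exact hs)
  | andIc₁ d₀ hr ih =>
      intro s hs
      rcases hs with rfl | hs | hs
      · exact ID.mem (Set.mem_insert _ _)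
      · exact ID.mem (by right; left; exact hs)
      · exact (ih s hs).mono (fun t ht => by right; right; exact ht)
  | andEc₀ hr ih =>
      intro s hs
      rcases hs with rfl | hs
      · exact ID.mem (Set.mem_insert _ _)
      · exact (ih s hs).mono (fun t ht => by right; exact ht)
  | andEc₁ hr ih =>
      intro s hs
      rcases hs with rfl | hs
      · exact ID.mem (Set.mem_insert _ _)
      · exact (ih s hs).mono (fun t ht => by right; exact ht)
  | orIc₀ hr ih =>
      intro s hs
      rcases hs with rfl | hs
      · exact ID.mem (Set.mem_insert _ _)
      · exact (ih s hs).mono (fun t ht => by right; exact ht)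
  | orIc₁ hr ih =>
      intro s hs
      rcases hs with rfl | hs
      · exact ID.mem (Set.mem_insert _ _)
      · exact (ih s hs).mono (fun t ht => by right; exact ht)
  | orEc₀ d₀ d₁ hr ih =>
      intro s hs
      rcases hs with rfl | (hs | hs) | hs
      · exact ID.mem (Set.mem_insert _ _)
      · exact (ih s hs).mono (fun t ht => by right; left; left; exact ht)
      · exact ID.mem (by right; left; right; exact hs)
      · exact ID.mem (by right; right; exact hs)
  | orEc₁ d d₁ hr ih =>
      intro s hs
      rcases hs with rfl | (hs | hs) | hs
      · exact ID.mem (Set.mem_insert _ _)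
      · exact ID.mem (by right; left; left; exact hs)
      · exact (ih s hs).mono (fun t ht => by right; left; right; exact ht)
      · exact ID.mem (by right; right; exact hs)
  | orEc₂ d d₀ hr ih =>
      intro s hs
      rcases hs with rfl | (hs | hs) | hs
      · exact ID.mem (Set.mem_insert _ _)
      · exact ID.mem (by right; left; left; exact hs)
      · exact ID.mem (by right; left; right; exact hs)
      · exact (ih s hs).mono (fun t ht => by right; right; exact ht)
  | impIc hr ih =>
      intro s hs
      rcases hs with rfl | hs
      · exact ID.mem (Set.mem_insert _ _)
      · exact (ih s hs).mono (fun t ht => by right; exact ht)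
  | impEc₀ d₁ hr ih =>
      intro s hs
      rcases hs with rfl | hs | hs
      · exact ID.mem (Set.mem_insert _ _)
      · exact (ih s hs).mono (fun t ht => by right; left; exact ht)
      · exact ID.mem (by right; right; exact hs)
  | impEc₁ d₀ hr ih =>
      intro s hs
      rcases hs with rfl | hs | hs
      · exact ID.mem (Set.mem_insert _ _)
      · exact ID.mem (by right; left; exact hs)
      · exact (ih s hs).mono (fun t ht => by right; right; exact ht)
end

section
/- For any formula α and any choice k of one disjunct from each strictly positive occurrence of a disjunction in α, the sequent α(k) ⇒ α is intuitionistically derivable, where α(k) is obtained from α by replacing each strictly positive disjunction β₀ ∨ β₁ by the chosen disjunct, replacing longer subformula occurrences first. -/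
/-- `Str σ α`: `σ` is obtained from `α` by replacing each strictly positive occurrence of a
disjunction by one of its disjuncts (longer occurrences first). -/
inductive Str : Fml → Fml → Prop
  | var (n) : Str (Fml.var n) (Fml.var n)
  | bot : Str Fml.bot Fml.bot
  | and {σ₀ σ₁ α₀ α₁} : Str σ₀ α₀ → Str σ₁ α₁ → Str (Fml.and σ₀ σ₁) (Fml.and α₀ α₁)
  | imp {σ α₀ α₁} : Str σ α₁ → Str (Fml.imp α₀ σ) (Fml.imp α₀ α₁)
  | or₀ {σ α₀ α₁} : Str σ α₀ → Str σ (Fml.or α₀ α₁)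
  | or₁ {σ α₀ α₁} : Str σ α₁ → Str σ (Fml.or α₀ α₁)

def NJ.weaken : ∀ {Γ Γ' α}, Γ ⊆ Γ' → NJ Γ α → NJ Γ' α
  | _, _, _, h, .ax m => .ax (h m)
  | _, _, _, h, .botE m => .botE (h m)
  | _, _, _, h, .andI a b => .andI (a.weaken h) (b.weaken h)
  | _, _, _, h, .andE₀ a => .andE₀ (a.weaken h)
  | _, _, _, h, .andE₁ a => .andE₁ (a.weaken h)
  | _, _, _, h, .orI₀ a => .orI₀ (a.weaken h)
  | _, _, _, h, .orI₁ a => .orI₁ (a.weaken h)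
  | _, _, _, h, .orE a b c =>
      .orE (a.weaken h) (b.weaken (Finset.insert_subset_insert _ h))
        (c.weaken (Finset.insert_subset_insert _ h))
  | _, _, _, h, .impI a => .impI (a.weaken (Finset.insert_subset_insert _ h))
  | _, _, _, h, .impE a b => .impE (a.weaken h) (b.weaken h)

theorem str_lift {σ α : Fml} (h : Str σ α) :
    ∀ Γ : Cedent, Derivable Γ σ → Derivable Γ α := by
  induction h with
  | var n => exact fun _ d => d
  | bot => exact fun _ d => d
  | and h₀ h₁ ih₀ ih₁ =>
      intro Γ ⟨d⟩
      obtain ⟨d₀⟩ := ih₀ Γ ⟨.andE₀ d⟩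
      obtain ⟨d₁⟩ := ih₁ Γ ⟨.andE₁ d⟩
      exact ⟨.andI d₀ d₁⟩
  | @imp σ α₀ α₁ h ih =>
      intro Γ ⟨d⟩
      obtain ⟨d'⟩ := ih (insert α₀ Γ)
        ⟨.impE (d.weaken (Finset.subset_insert _ _)) (.ax (Finset.mem_insert_self _ _))⟩
      exact ⟨.impI d'⟩
  | or₀ h ih =>
      intro Γ d
      obtain ⟨d'⟩ := ih Γ d
      exact ⟨.orI₀ d'⟩
  | or₁ h ih =>
      intro Γ d
      obtain ⟨d'⟩ := ih Γ d
      exact ⟨.orI₁ d'⟩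

/-- Any strengthening `α(k)` of `α` (choosing one disjunct from each strictly positive
disjunction) intuitionistically implies `α`. -/
theorem strengthening_implies (σ α : Fml) (h : Str σ α) :
    Derivable {σ} α :=
  str_lift h _ ⟨.ax (Finset.mem_singleton_self σ)⟩
end

section
/- Suppose Γ ⇒ α₀ ∨ α₁ is intuitionistically derivable. Then for any strengthening Γ(k) of Γ, obtained by choosing one disjunct from each strictly positive occurrence of a disjunction in the formulas of Γ, there exists i ∈ {0,1} such that Γ(k) ⇒ αᵢ is intuitionistically derivable. -/
namespace GenDP

/-- Weakening. -/
def weaken : ∀ {Γ α}, NJ Γ α → ∀ {Δ : Cedent}, Γ ⊆ Δ → NJ Δ α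
  | _, _, .ax h, _, hs => .ax (hs h)
  | _, _, .botE h, _, hs => .botE (hs h)
  | _, _, .andI d e, _, hs => .andI (weaken d hs) (weaken e hs)
  | _, _, .andE₀ d, _, hs => .andE₀ (weaken d hs)
  | _, _, .andE₁ d, _, hs => .andE₁ (weaken d hs)
  | _, _, .orI₀ d, _, hs => .orI₀ (weaken d hs)
  | _, _, .orI₁ d, _, hs => .orI₁ (weaken d hs)
  | _, _, .orE d e f, _, hs =>
      .orE (weaken d hs) (weaken e (Finset.insert_subset_insert _ hs))
        (weaken f (Finset.insert_subset_insert _ hs))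
  | _, _, .impI d, _, hs => .impI (weaken d (Finset.insert_subset_insert _ hs))
  | _, _, .impE d e, _, hs => .impE (weaken d hs) (weaken e hs)

theorem _root_.Derivable.weaken {Γ Δ α} (h : Derivable Γ α) (hs : Γ ⊆ Δ) : Derivable Δ α :=
  h.elim fun d => ⟨GenDP.weaken d hs⟩

/-- Ex falso for arbitrary formulas. -/
def efq : ∀ {Γ} (α), NJ Γ Fml.bot → NJ Γ α
  | Γ, .var p, d => .impE (.impI (.botE (Finset.mem_insert_self _ _))) d
  | Γ, .bot, d => d
  | Γ, .and α β, d => .andI (efq α d) (efq β d)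
  | Γ, .or α β, d => .orI₀ (efq α d)
  | Γ, .imp α β, d => .impI (efq β (weaken d (Finset.subset_insert _ _)))

theorem mem_derivable {Γ α} (h : α ∈ Γ) : Derivable Γ α := ⟨.ax h⟩

/-- Composition (admissible cut). -/
theorem comp : ∀ {Δ β}, NJ Δ β → ∀ {Γ : Cedent}, (∀ δ ∈ Δ, Derivable Γ δ) → Derivable Γ β
  | _, _, .ax h, _, hΓ => hΓ _ h
  | _, _, .botE (p := p) h, _, hΓ => (hΓ _ h).elim fun d => ⟨efq (.var p) d⟩
  | _, _, .andI d e, _, hΓ => ((comp d hΓ).elim fun d' => (comp e hΓ).elim fun e' => ⟨.andI d' e'⟩)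
  | _, _, .andE₀ d, _, hΓ => (comp d hΓ).elim fun d' => ⟨.andE₀ d'⟩
  | _, _, .andE₁ d, _, hΓ => (comp d hΓ).elim fun d' => ⟨.andE₁ d'⟩
  | _, _, .orI₀ d, _, hΓ => (comp d hΓ).elim fun d' => ⟨.orI₀ d'⟩
  | _, _, .orI₁ d, _, hΓ => (comp d hΓ).elim fun d' => ⟨.orI₁ d'⟩
  | Δ, _, .orE (α := α) (β := β) d e f, Γ, hΓ => by
      have hα : ∀ δ ∈ insert α Δ, Derivable (insert α Γ) δ := by
        intro δ hδ
        rcases Finset.mem_insert.1 hδ with rfl | hδ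
        · exact mem_derivable (Finset.mem_insert_self _ _)
        · exact (hΓ _ hδ).weaken (Finset.subset_insert _ _)
      have hβ : ∀ δ ∈ insert β Δ, Derivable (insert β Γ) δ := by
        intro δ hδ
        rcases Finset.mem_insert.1 hδ with rfl | hδ
        · exact mem_derivable (Finset.mem_insert_self _ _)
        · exact (hΓ _ hδ).weaken (Finset.subset_insert _ _)
      exact (comp d hΓ).elim fun d' => (comp e hα).elim fun e' => (comp f hβ).elim
        fun f' => ⟨.orE d' e' f'⟩
  | Δ, _, .impI (α := α) d, Γ, hΓ => by
      have hα : ∀ δ ∈ insert α Δ, Derivable (insert α Γ) δ := by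
        intro δ hδ
        rcases Finset.mem_insert.1 hδ with rfl | hδ
        · exact mem_derivable (Finset.mem_insert_self _ _)
        · exact (hΓ _ hδ).weaken (Finset.subset_insert _ _)
      exact (comp d hα).elim fun d' => ⟨.impI d'⟩
  | _, _, .impE d e, _, hΓ => (comp d hΓ).elim fun d' => (comp e hΓ).elim fun e' => ⟨.impE d' e'⟩

theorem str_harrop {σ α} (h : Str σ α) : Harrop σ := by
  induction h with
  | var => trivial
  | bot => trivial
  | and _ _ ih₀ ih₁ => exact ⟨ih₀, ih₁⟩
  | imp _ ih => exact ih
  | or₀ _ ih => exact ih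
  | or₁ _ ih => exact ih

theorem str_implies : ∀ {σ α}, Str σ α → ∀ {Γ}, Derivable Γ σ → Derivable Γ α
  | _, _, .var _, _, h => h
  | _, _, .bot, _, h => h
  | _, _, .and h₀ h₁, Γ, h => by
      have d₀ := str_implies h₀ (h.elim fun d => ⟨.andE₀ d⟩)
      have d₁ := str_implies h₁ (h.elim fun d => ⟨.andE₁ d⟩)
      exact d₀.elim fun a => d₁.elim fun b => ⟨.andI a b⟩
  | _, _, .imp (α₀ := α₀) h, Γ, hd => by
      have : Derivable (insert α₀ Γ) _ :=
        hd.elim fun d => ⟨NJ.impE (weaken d (Finset.subset_insert _ _))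
          (.ax (Finset.mem_insert_self _ _))⟩
      exact (str_implies h this).elim fun d => ⟨.impI d⟩
  | _, _, .or₀ h, _, hd => (str_implies h hd).elim fun d => ⟨.orI₀ d⟩
  | _, _, .or₁ h, _, hd => (str_implies h hd).elim fun d => ⟨.orI₁ d⟩

/-- Aczel slash. -/
def Slash (Γ : Cedent) : Fml → Prop
  | .var n => Derivable Γ (.var n)
  | .bot => Derivable Γ .bot
  | .and α β => Slash Γ α ∧ Slash Γ β
  | .or α β => Slash Γ α ∨ Slash Γ β
  | .imp α β => Derivable Γ (.imp α β) ∧ (Slash Γ α → Slash Γ β)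

theorem slash_derivable : ∀ {Γ α}, Slash Γ α → Derivable Γ α
  | _, .var _, h => h
  | _, .bot, h => h
  | _, .and _ _, h => (slash_derivable h.1).elim fun a =>
      (slash_derivable h.2).elim fun b => ⟨.andI a b⟩
  | _, .or _ _, Or.inl h => (slash_derivable h).elim fun a => ⟨.orI₀ a⟩
  | _, .or _ _, Or.inr h => (slash_derivable h).elim fun a => ⟨.orI₁ a⟩
  | _, .imp _ _, h => h.1

theorem harrop_slash : ∀ {γ}, Harrop γ → ∀ {Γ}, Derivable Γ γ → Slash Γ γ := by
  intro γ
  induction γ with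
  | var n => exact fun _ _ h => h
  | bot => exact fun _ _ h => h
  | and α β ihα ihβ =>
      intro hh Γ h
      exact ⟨ihα hh.1 (h.elim fun d => ⟨.andE₀ d⟩), ihβ hh.2 (h.elim fun d => ⟨.andE₁ d⟩)⟩
  | or α β _ _ => exact fun hh => absurd hh not_false
  | imp α β _ ihβ =>
      intro hh Γ h
      refine ⟨h, fun hs => ihβ hh ?_⟩
      exact (slash_derivable hs).elim fun a => h.elim fun d => ⟨.impE d a⟩

theorem slash_sound : ∀ {Δ β}, NJ Δ β → ∀ {Γ}, (∀ δ ∈ Δ, Slash Γ δ) → Slash Γ β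
  | _, _, .ax h, _, hΓ => hΓ _ h
  | _, _, .botE (p := p) h, _, hΓ => (hΓ _ h).elim fun d => ⟨efq (.var p) d⟩
  | _, _, .andI d e, _, hΓ => ⟨slash_sound d hΓ, slash_sound e hΓ⟩
  | _, _, .andE₀ d, _, hΓ => (slash_sound d hΓ).1
  | _, _, .andE₁ d, _, hΓ => (slash_sound d hΓ).2
  | _, _, .orI₀ d, _, hΓ => Or.inl (slash_sound d hΓ)
  | _, _, .orI₁ d, _, hΓ => Or.inr (slash_sound d hΓ)
  | _, _, .orE d e f, Γ, hΓ => by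
      rcases slash_sound d hΓ with hs | hs
      · exact slash_sound e (fun δ hδ => by
          rcases Finset.mem_insert.1 hδ with rfl | hδ
          exacts [hs, hΓ _ hδ])
      · exact slash_sound f (fun δ hδ => by
          rcases Finset.mem_insert.1 hδ with rfl | hδ
          exacts [hs, hΓ _ hδ])
  | _, _, .impI d, Γ, hΓ =>
      ⟨comp (.impI d) (fun δ hδ => slash_derivable (hΓ _ hδ)),
       fun hs => slash_sound d (fun δ hδ => by
          rcases Finset.mem_insert.1 hδ with rfl | hδ
          exacts [hs, hΓ _ hδ])⟩
  | _, _, .impE d e, _, hΓ => (slash_sound d hΓ).2 (slash_sound e hΓ)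

end GenDP

/-- The generalized disjunction property: if `Γ ⇒ α₀ ∨ α₁` is derivable, then for any
strengthening `Γ(k)` of `Γ` (choosing one disjunct from each strictly positive disjunction
in the formulas of `Γ`), one of `Γ(k) ⇒ α₀`, `Γ(k) ⇒ α₁` is derivable. -/

theorem generalized_dp (Γ Δ : Cedent) (α₀ α₁ : Fml)
    (h : Derivable Γ (Fml.or α₀ α₁))
    (g : Fml → Fml) (hg : ∀ γ ∈ Γ, Str (g γ) γ) (hΔ : Δ = Γ.image g) :
    Derivable Δ α₀ ∨ Derivable Δ α₁ := by
  subst hΔ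
  set Δ := Γ.image g with hΔ
  -- every formula of Γ is derivable from Δ
  have hder : ∀ γ ∈ Γ, Derivable Δ γ := fun γ hγ =>
    GenDP.str_implies (hg γ hγ) (GenDP.mem_derivable (Finset.mem_image_of_mem g hγ))
  obtain ⟨d⟩ := h
  have hΔor : Derivable Δ (Fml.or α₀ α₁) := GenDP.comp d hder
  have hharrop : ∀ δ ∈ Δ, Harrop δ := by
    intro δ hδ
    obtain ⟨γ, hγ, rfl⟩ := Finset.mem_image.1 hδ
    exact GenDP.str_harrop (hg γ hγ)
  obtain ⟨e⟩ := hΔor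
  have hs : GenDP.Slash Δ (Fml.or α₀ α₁) :=
    GenDP.slash_sound e (fun δ hδ =>
      GenDP.harrop_slash (hharrop δ hδ) (GenDP.mem_derivable hδ))
  rcases hs with hs | hs
  · exact Or.inl (GenDP.slash_derivable hs)
  · exact Or.inr (GenDP.slash_derivable hs)
end

section
/- For a finite set H of Horn clauses, H is unsatisfiable (as a propositional CNF) if and only if the empty clause is derivable from H by positive unit resolution (resolution where one parent is always a positive unit clause). -/
/-- A literal: `(true, p)` is the positive literal `p`, `(false, p)` is `¬p`. -/
abbrev Lit := Bool × ℕ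

/-- A clause: a finite set of literals, read disjunctively. -/
abbrev Clause := Finset Lit

/-- A Horn clause: at most one positive literal. -/
def IsHorn (C : Clause) : Prop := (C.filter fun l => l.1 = true).card ≤ 1

/-- An assignment satisfies a clause if it makes some literal of it true. -/
def ClauseSat (v : ℕ → Bool) (C : Clause) : Prop := ∃ l ∈ C, v l.2 = l.1

/-- Clauses derivable from `H` by positive unit resolution: from a (derived) positive unit
clause `{p}` and a clause `C` with `¬p ∈ C`, derive `C \ {¬p}`. -/
inductive PUR (H : Finset Clause) : Clause → Prop
  | mem {C} : C ∈ H → PUR H C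
  | res {p : ℕ} {C : Clause} : PUR H {(true, p)} → PUR H C → (false, p) ∈ C →
      PUR H (C.erase (false, p))

lemma pur_sound {H : Finset Clause} {C : Clause} (h : PUR H C)
    (v : ℕ → Bool) (hv : ∀ D ∈ H, ClauseSat v D) : ClauseSat v C := by
  induction h with
  | mem hC => exact hv _ hC
  | res hu hC hneg ihu ihC =>
    obtain ⟨l, hl, hvl⟩ := ihC
    obtain ⟨u, hu', hvu⟩ := ihu
    simp only [Finset.mem_singleton] at hu'
    subst hu'
    refine ⟨l, Finset.mem_erase.mpr ⟨?_, hl⟩, hvl⟩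
    rintro rfl
    simp only at hvu hvl
    rw [hvl] at hvu
    exact absurd hvu (by simp)

lemma pur_elim {H : Finset Clause} : ∀ (n : ℕ) (C : Clause),
    (C.filter fun l => l.1 = false).card = n → PUR H C →
    (∀ q, (false, q) ∈ C → PUR H {(true, q)}) →
    PUR H (C.filter fun l => l.1 = true) := by
  intro n
  induction n with
  | zero =>
    intro C hcard hC _
    have : C.filter (fun l => l.1 = true) = C := by
      apply Finset.filter_true_of_mem
      intro l hl
      by_contra hne
      have hne' : l.1 = false := by cases h : l.1 <;> simp_all
      have : l ∈ C.filter fun l => l.1 = false :=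
        Finset.mem_filter.mpr ⟨hl, hne'⟩
      rw [Finset.card_eq_zero] at hcard
      simp [hcard] at this
    rw [this]; exact hC
  | succ n ih =>
    intro C hcard hC hq
    have hne : (C.filter fun l => l.1 = false).Nonempty := by
      rw [← Finset.card_pos, hcard]; omega
    obtain ⟨l, hl⟩ := hne
    rw [Finset.mem_filter] at hl
    have hl2 : (false, l.2) ∈ C := by
      have : l = (false, l.2) := by
        obtain ⟨a, b⟩ := l; simp_all
      rw [← this]; exact hl.1
    have hres := PUR.res (hq l.2 hl2) hC hl2
    have hfe : (C.erase (false, l.2)).filter (fun x => x.1 = true)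
        = C.filter (fun x => x.1 = true) := by
      rw [Finset.filter_erase]
      apply Finset.erase_eq_of_notMem
      simp [Finset.mem_filter]
    have hcard' : ((C.erase (false, l.2)).filter fun x => x.1 = false).card = n := by
      rw [Finset.filter_erase]
      rw [Finset.card_erase_of_mem (by simp [Finset.mem_filter, hl2])]
      omega
    have := ih (C.erase (false, l.2)) hcard' hres
      (fun q hqmem => hq q (Finset.mem_of_mem_erase hqmem))
    rwa [hfe] at this

/-- A finite set of Horn clauses is unsatisfiable iff the empty clause is derivable from it
by positive unit resolution. -/
theorem horn_unsat_iff_pur (H : Finset Clause) (hH : ∀ C ∈ H, IsHorn C) :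
    (¬ ∃ v : ℕ → Bool, ∀ C ∈ H, ClauseSat v C) ↔ PUR H ∅ := by
  constructor
  · intro hunsat
    by_contra hno
    apply hunsat
    classical
    refine ⟨fun p => if PUR H {(true, p)} then true else false, ?_⟩
    intro C hC
    by_contra hnosat
    have hq : ∀ q, (false, q) ∈ C → PUR H {(true, q)} := by
      intro q hqmem
      by_contra hnp
      exact hnosat ⟨(false, q), hqmem, by simp [hnp]⟩
    have hpos := pur_elim _ C rfl (PUR.mem hC) hq
    have hhorn := hH C hC
    unfold IsHorn at hhorn
    rcases Nat.lt_or_ge (C.filter fun l => l.1 = true).card 1 with h1 | h1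
    · have : (C.filter fun l => l.1 = true) = ∅ := by
        rw [← Finset.card_eq_zero]; omega
      rw [this] at hpos; exact hno hpos
    · have hcard1 : (C.filter fun l => l.1 = true).card = 1 := le_antisymm hhorn h1
      obtain ⟨l, hl⟩ := Finset.card_eq_one.mp hcard1
      have hlmem : l ∈ C.filter fun l => l.1 = true := by simp [hl]
      rw [Finset.mem_filter] at hlmem
      have hl' : l = (true, l.2) := by
        obtain ⟨a, b⟩ := l; simp_all
      rw [hl, hl'] at hpos
      exact hnosat ⟨l, hlmem.1, by rw [hl']; simp [hpos]⟩
  · intro hpur ⟨v, hv⟩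
    obtain ⟨l, hl, _⟩ := pur_sound hpur v hv
    simp at hl
end

section
/- Let Σ be the alphabet and let M be a deterministic one-tape Turing machine with transition described by a function f on triples of tape/state symbols such that the symbol at position i at time t+1 is f(a,b,c) whenever a,b,c are the symbols at positions i−1,i,i+1 at time t. Let Γ(x,t) be the conjunction of the boundary axioms, the initial-configuration formula δ₀(x) for input x, and the transition formulas δ₁,…,δ_t (Horn implications P(a,i−1,s) ∧ P(b,i,s) ∧ P(c,i+1,s) ⊃ P(f(a,b,c),i,s+1)). Then for the M-computation σ₀ ⊢ σ₁ ⊢ ⋯ on x: symbol a is the i-th symbol of σ_t if and only if Γ(x,t) ⇒ P(a,i,t) is intuitionistically derivable. -/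
section TuringMachine

variable {Sym : Type} [Fintype Sym] [DecidableEq Sym]

/-- The atom `P(a,i,t)`: symbol `a` is the `i`-th symbol of the `t`-th configuration. -/
def Patom (enc : Sym → ℕ → ℕ → ℕ) (a : Sym) (i t : ℕ) : Fml := Fml.var (enc a i t)

/-- The computation of the machine: `config f B ℓ init t i` is the `i`-th symbol of the
`t`-th configuration, determined from the initial configuration `init` by the local
transition function `f` on triples of neighbouring symbols, with blanks `B` kept at
position `0` and at positions beyond `ℓ`. -/
def config (f : Sym → Sym → Sym → Sym) (B : Sym) (ℓ : ℕ) (init : ℕ → Sym) : ℕ → ℕ → Sym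
  | 0, i => init i
  | t + 1, i =>
      if i = 0 ∨ ℓ + 1 ≤ i then B
      else f (config f B ℓ init t (i - 1)) (config f B ℓ init t i)
        (config f B ℓ init t (i + 1))

/-- The boundary axioms `β`: positions `0` and `ℓ+1` are blank at every time `t ≤ ℓ`. -/
def betaTM (enc : Sym → ℕ → ℕ → ℕ) (B : Sym) (ℓ : ℕ) : Finset Fml :=
  (Finset.range (ℓ + 1)).image (fun s => Patom enc B 0 s) ∪
    (Finset.range (ℓ + 1)).image (fun s => Patom enc B (ℓ + 1) s)

/-- The initial-configuration formula `δ₀(x)`. -/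
def delta0TM (enc : Sym → ℕ → ℕ → ℕ) (init : ℕ → Sym) (ℓ : ℕ) : Finset Fml :=
  (Finset.Icc 1 ℓ).image fun i => Patom enc (init i) i 0

/-- The transition Horn formulas `δ_{s+1}`:
`P(a,i−1,s) ∧ P(b,i,s) ∧ P(c,i+1,s) ⊃ P(f(a,b,c),i,s+1)` for `1 ≤ i ≤ ℓ`. -/
def deltaTM (enc : Sym → ℕ → ℕ → ℕ) (f : Sym → Sym → Sym → Sym) (ℓ s : ℕ) : Finset Fml :=
  (Finset.univ ×ˢ (Finset.univ ×ˢ (Finset.univ ×ˢ Finset.Icc 1 ℓ))).image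
    fun p : Sym × Sym × Sym × ℕ =>
      Fml.imp
        (Fml.and (Patom enc p.1 (p.2.2.2 - 1) s)
          (Fml.and (Patom enc p.2.1 p.2.2.2 s) (Patom enc p.2.2.1 (p.2.2.2 + 1) s)))
        (Patom enc (f p.1 p.2.1 p.2.2.1) p.2.2.2 (s + 1))

/-- The cedent `Γ(x,t)`: boundary axioms, initial configuration, and the transition
formulas `δ₁, …, δ_t`. -/
def GammaTM (enc : Sym → ℕ → ℕ → ℕ) (f : Sym → Sym → Sym → Sym) (B : Sym) (ℓ : ℕ)
    (init : ℕ → Sym) (t : ℕ) : Finset Fml :=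
  betaTM enc B ℓ ∪ delta0TM enc init ℓ ∪ (Finset.range t).biUnion (deltaTM enc f ℓ)

end TuringMachine

/-! The forward direction follows the computation: by induction on time, each atom `P(a,i,s+1)`
comes from the three atoms at time `s` below it through a Horn clause of `δ_{s+1}`, while the
atoms at time `0` and on the boundary are axioms. For the converse, classical soundness of NJ
is applied to the valuation that makes `P(a,i,s)` true exactly when `a` is the `i`-th symbol of
the `s`-th configuration (injectivity of `enc` makes distinct atoms independent variables); this
minimal model of `Γ(x,t)` then forces `config t i = a`. -/

def Fml.Holds (v : ℕ → Prop) : Fml → Prop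
  | .var n => v n
  | .bot => False
  | .and α β => α.Holds v ∧ β.Holds v
  | .or α β => α.Holds v ∨ β.Holds v
  | .imp α β => α.Holds v → β.Holds v

theorem NJ.sound (v : ℕ → Prop) {Γ : Cedent} {α : Fml} (d : NJ Γ α) :
    (∀ γ ∈ Γ, γ.Holds v) → α.Holds v := by
  induction d with
  | ax hm => exact fun h => h _ hm
  | botE hm => exact fun h => (h _ hm).elim
  | andI _ _ ih₁ ih₂ => exact fun h => ⟨ih₁ h, ih₂ h⟩
  | andE₀ _ ih => exact fun h => (ih h).1
  | andE₁ _ ih => exact fun h => (ih h).2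
  | orI₀ _ ih => exact fun h => Or.inl (ih h)
  | orI₁ _ ih => exact fun h => Or.inr (ih h)
  | orE _ _ _ ih ih₁ ih₂ =>
      intro h
      rcases ih h with hα | hβ
      · exact ih₁ ((Finset.forall_mem_insert _ _ _).2 ⟨hα, h⟩)
      · exact ih₂ ((Finset.forall_mem_insert _ _ _).2 ⟨hβ, h⟩)
  | impI _ ih => exact fun h hα => ih ((Finset.forall_mem_insert _ _ _).2 ⟨hα, h⟩)
  | impE _ _ ih₁ ih₂ => exact fun h => ih₁ h (ih₂ h)

theorem Derivable.holds {Γ : Cedent} {α : Fml} (h : Derivable Γ α) (v : ℕ → Prop)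
    (hΓ : ∀ γ ∈ Γ, γ.Holds v) : α.Holds v :=
  h.elim fun d => d.sound v hΓ

theorem Derivable.of_mem {Γ : Cedent} {α : Fml} (h : α ∈ Γ) : Derivable Γ α :=
  ⟨.ax h⟩

theorem Derivable.of_imp_and {Γ : Cedent} {α β γ δ : Fml}
    (hImp : Fml.imp (Fml.and α (Fml.and β γ)) δ ∈ Γ)
    (hα : Derivable Γ α) (hβ : Derivable Γ β) (hγ : Derivable Γ γ) : Derivable Γ δ := by
  obtain ⟨dα⟩ := hα
  obtain ⟨dβ⟩ := hβ
  obtain ⟨dγ⟩ := hγ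
  exact ⟨.impE (.ax hImp) (.andI dα (.andI dβ dγ))⟩

section TuringMachine

variable {Sym : Type} (f : Sym → Sym → Sym → Sym) (B : Sym) (ℓ : ℕ) (init : ℕ → Sym)
  (enc : Sym → ℕ → ℕ → ℕ)

theorem config_at_zero (hinit0 : init 0 = B) (s : ℕ) : config f B ℓ init s 0 = B := by
  cases s with
  | zero => exact hinit0
  | succ s => simp [config]

theorem config_of_succ_le (hinit1 : ∀ i, ℓ + 1 ≤ i → init i = B) (s : ℕ) {i : ℕ}
    (hi : ℓ + 1 ≤ i) : config f B ℓ init s i = B := by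
  cases s with
  | zero => exact hinit1 i hi
  | succ s => simp [config, hi]

theorem config_succ_of_mem_Icc (s : ℕ) {i : ℕ} (hi : i ∈ Finset.Icc 1 ℓ) :
    config f B ℓ init (s + 1) i =
      f (config f B ℓ init s (i - 1)) (config f B ℓ init s i) (config f B ℓ init s (i + 1)) := by
  rw [Finset.mem_Icc] at hi
  rw [config, if_neg (by omega)]

def computationVal (n : ℕ) : Prop :=
  ∃ a i s, enc a i s = n ∧ config f B ℓ init s i = a

theorem holds_patom_computationVal
    (henc : Function.Injective fun p : Sym × ℕ × ℕ => enc p.1 p.2.1 p.2.2) (a : Sym) (i s : ℕ) :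
    (Patom enc a i s).Holds (computationVal f B ℓ init enc) ↔ config f B ℓ init s i = a := by
  constructor
  · rintro ⟨a', i', s', he, hc⟩
    have hp : (a', i', s') = (a, i, s) := henc he
    simp only [Prod.mk.injEq] at hp
    obtain ⟨rfl, rfl, rfl⟩ := hp
    exact hc
  · intro h
    exact ⟨a, i, s, rfl, h⟩

variable [Fintype Sym]

theorem blank_mem_GammaTM (t : ℕ) {i s : ℕ} (hi : i = 0 ∨ i = ℓ + 1) (hs : s ≤ ℓ) :
    Patom enc B i s ∈ GammaTM enc f B ℓ init t := by
  have hs' : s ∈ Finset.range (ℓ + 1) := Finset.mem_range.2 (Nat.lt_succ_of_le hs)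
  refine Finset.mem_union_left _ (Finset.mem_union_left _ ?_)
  rcases hi with rfl | rfl
  · exact Finset.mem_union_left _ (Finset.mem_image_of_mem _ hs')
  · exact Finset.mem_union_right _ (Finset.mem_image_of_mem _ hs')

theorem init_mem_GammaTM (t : ℕ) {i : ℕ} (hi : i ∈ Finset.Icc 1 ℓ) :
    Patom enc (init i) i 0 ∈ GammaTM enc f B ℓ init t :=
  Finset.mem_union_left _ (Finset.mem_union_right _ (Finset.mem_image_of_mem _ hi))

theorem transition_mem_GammaTM {t s i : ℕ} (hs : s < t) (hi : i ∈ Finset.Icc 1 ℓ) (a b c : Sym) :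
    Fml.imp (Fml.and (Patom enc a (i - 1) s) (Fml.and (Patom enc b i s) (Patom enc c (i + 1) s)))
      (Patom enc (f a b c) i (s + 1)) ∈ GammaTM enc f B ℓ init t := by
  refine Finset.mem_union_right _ (Finset.mem_biUnion.2 ⟨s, Finset.mem_range.2 hs, ?_⟩)
  exact Finset.mem_image.2 ⟨(a, b, c, i), by simpa using hi, rfl⟩

theorem derivable_config_of_boundary (hinit0 : init 0 = B)
    (hinit1 : ∀ i, ℓ + 1 ≤ i → init i = B) (t : ℕ) {s i : ℕ} (hs : s ≤ ℓ)
    (hi : i = 0 ∨ i = ℓ + 1) :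
    Derivable (GammaTM enc f B ℓ init t) (Patom enc (config f B ℓ init s i) i s) := by
  have hB : config f B ℓ init s i = B := by
    rcases hi with rfl | rfl
    · exact config_at_zero f B ℓ init hinit0 s
    · exact config_of_succ_le f B ℓ init hinit1 s le_rfl
  rw [hB]
  exact .of_mem (blank_mem_GammaTM f B ℓ init enc t hi hs)

theorem derivable_config (hinit0 : init 0 = B) (hinit1 : ∀ i, ℓ + 1 ≤ i → init i = B)
    {t : ℕ} (ht : t ≤ ℓ) {s : ℕ} (hs : s ≤ t) {i : ℕ} (hi : i ≤ ℓ + 1) :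
    Derivable (GammaTM enc f B ℓ init t) (Patom enc (config f B ℓ init s i) i s) := by
  induction s generalizing i with
  | zero =>
      obtain hbd | hi' : (i = 0 ∨ i = ℓ + 1) ∨ i ∈ Finset.Icc 1 ℓ := by
        rw [Finset.mem_Icc]; omega
      · exact derivable_config_of_boundary f B ℓ init enc hinit0 hinit1 t (hs.trans ht) hbd
      · exact .of_mem (init_mem_GammaTM f B ℓ init enc t hi')
  | succ s ih =>
      obtain hbd | hi' : (i = 0 ∨ i = ℓ + 1) ∨ i ∈ Finset.Icc 1 ℓ := by
        rw [Finset.mem_Icc]; omega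
      · exact derivable_config_of_boundary f B ℓ init enc hinit0 hinit1 t (hs.trans ht) hbd
      have hs' : s ≤ t := Nat.le_of_succ_le hs
      rw [config_succ_of_mem_Icc f B ℓ init s hi']
      exact .of_imp_and (transition_mem_GammaTM f B ℓ init enc hs hi' _ _ _)
        (ih hs' (by omega)) (ih hs' (by omega)) (ih hs' (by rw [Finset.mem_Icc] at hi'; omega))

theorem GammaTM_holds_computationVal
    (henc : Function.Injective fun p : Sym × ℕ × ℕ => enc p.1 p.2.1 p.2.2)
    (hinit0 : init 0 = B) (hinit1 : ∀ i, ℓ + 1 ≤ i → init i = B) (t : ℕ) :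
    ∀ γ ∈ GammaTM enc f B ℓ init t, γ.Holds (computationVal f B ℓ init enc) := by
  intro γ hγ
  simp only [GammaTM, betaTM, delta0TM, deltaTM, Finset.mem_union, Finset.mem_image,
    Finset.mem_biUnion] at hγ
  rcases hγ with ((⟨s, -, rfl⟩ | ⟨s, -, rfl⟩) | ⟨j, -, rfl⟩) | ⟨s, -, ⟨a, b, c, j⟩, hj, rfl⟩
  · exact (holds_patom_computationVal f B ℓ init enc henc _ _ _).2
      (config_at_zero f B ℓ init hinit0 s)
  · exact (holds_patom_computationVal f B ℓ init enc henc _ _ _).2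
      (config_of_succ_le f B ℓ init hinit1 s le_rfl)
  · exact (holds_patom_computationVal f B ℓ init enc henc _ _ _).2 rfl
  · rintro ⟨ha, hb, hc⟩
    simp only [holds_patom_computationVal f B ℓ init enc henc] at ha hb hc ⊢
    rw [config_succ_of_mem_Icc f B ℓ init s (by simpa using hj), ha, hb, hc]

end TuringMachine

theorem tm_computation_iff_derivable_general {Sym : Type} [Fintype Sym]
    (enc : Sym → ℕ → ℕ → ℕ)
    (henc : Function.Injective fun p : Sym × ℕ × ℕ => enc p.1 p.2.1 p.2.2)
    (f : Sym → Sym → Sym → Sym) (B : Sym) (ℓ : ℕ) (init : ℕ → Sym)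
    (hinit0 : init 0 = B) (hinit1 : ∀ i, ℓ + 1 ≤ i → init i = B)
    (t : ℕ) (ht : t ≤ ℓ) (i : ℕ) (hi : i ≤ ℓ + 1) (a : Sym) :
    config f B ℓ init t i = a ↔
      Derivable (GammaTM enc f B ℓ init t) (Patom enc a i t) := by
  constructor
  · rintro rfl
    exact derivable_config f B ℓ init enc hinit0 hinit1 ht le_rfl hi
  · intro hd
    have hsound := hd.holds _ (GammaTM_holds_computationVal f B ℓ init enc henc hinit0 hinit1 t)
    exact (holds_patom_computationVal f B ℓ init enc henc a i t).1 hsound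

/-- Characterization of the machine computation by intuitionistic derivability:
`a` is the `i`-th symbol of the `t`-th configuration iff `Γ(x,t) ⇒ P(a,i,t)` is
intuitionistically derivable. -/
theorem tm_computation_iff_derivable {Sym : Type} [Fintype Sym] [DecidableEq Sym]
    (enc : Sym → ℕ → ℕ → ℕ)
    (henc : Function.Injective fun p : Sym × ℕ × ℕ => enc p.1 p.2.1 p.2.2)
    (f : Sym → Sym → Sym → Sym) (B : Sym) (ℓ : ℕ) (init : ℕ → Sym)
    (hinit0 : init 0 = B) (hinit1 : ∀ i, ℓ + 1 ≤ i → init i = B)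
    (t : ℕ) (ht : t ≤ ℓ) (i : ℕ) (hi : i ≤ ℓ + 1) (a : Sym) :
    config f B ℓ init t i = a ↔
      Derivable (GammaTM enc f B ℓ init t) (Patom enc a i t) :=
  tm_computation_iff_derivable_general enc henc f B ℓ init hinit0 hinit1 t ht i hi a
end
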